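/- arXiv:1710.02552 — 4 statements merged into one kernel-verified Lean document; each statement's English description precedes it below -/
import Mathlib

section
/- Inhomogeneous covering theorem: Let Λ ⊆ ℝ^n be a full-rank lattice, V = ⋃_{i=1}^k (v_i + Λ) a discrete lattice-periodic set with pairwise distinct cosets, ℓ ∈ ℕ with ℓ ≥ 1, and let D₁, D₂ ⊆ ℝ^n be bounded measurable sets with vol(D₁) + vol(D₂) > ℓ·det(Λ)/k and such that every translate of D₁ and every translate of D₂ contains at most ℓ points of V. Then every translate of D₁ − D₂ contains at least ℓ points of V − V. -/
/-!
Average over a fundamental domain `F` of `Λ`: as `V` is the disjoint union of `k` cosets of `Λ`,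
the number of points of `V` in `t + D`, integrated over `t ∈ F`, is `k · vol D`. Since
`ℓ · vol F < k (vol D₁ + vol D₂)`, some `t` has `|A| + |B| > ℓ` for `A = (t + z + D₁) ∩ V` and
`B = (t + D₂) ∩ V`. As `|A|, |B| ≤ ℓ`, both are nonempty, and Cauchy–Davenport in the
torsion-free group `ℝⁿ` gives `|A - B| ≥ |A| + |B| - 1 ≥ ℓ`, while
`A - B ⊆ (z + (D₁ - D₂)) ∩ (V - V)`.
-/

open MeasureTheory Set Pointwise
open scoped ENNReal Matrix

/-- The full-rank lattice `B·ℤⁿ` determined by an invertible matrix `B`. -/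
def latticeOf {n : ℕ} (B : Matrix (Fin n) (Fin n) ℝ) : Set (Fin n → ℝ) :=
  {x | ∃ m : Fin n → ℤ, x = B.mulVec (fun i => (m i : ℝ))}

theorem exists_basis_span_eq_latticeOf {n : ℕ} {B : Matrix (Fin n) (Fin n) ℝ} (hB : B.det ≠ 0) :
    ∃ b : Module.Basis (Fin n) ℝ (Fin n → ℝ),
      (Submodule.span ℤ (range b) : Set (Fin n → ℝ)) = latticeOf B ∧
      volume (ZSpan.fundamentalDomain b) = ENNReal.ofReal |B.det| := by
  let b := (Pi.basisFun ℝ (Fin n)).map (B.toLinearEquiv' (B.invertibleOfIsUnitDet hB.isUnit))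
  have hb (i j : Fin n) : b i j = B j i := by
    simp only [b, Module.Basis.map_apply, Pi.basisFun_apply]
    exact congrFun (Matrix.mulVec_single_one B i) j
  have hsum (c : Fin n → ℤ) : ∑ i, c i • b i = B *ᵥ (fun i => (c i : ℝ)) := by
    ext j
    simp [Matrix.mulVec, dotProduct, hb, mul_comm]
  refine ⟨b, ?_, ?_⟩
  · ext x
    simp only [SetLike.mem_coe, Submodule.mem_span_range_iff_exists_fun, hsum, latticeOf,
      mem_ofPred_eq, eq_comm]
  · rw [ZSpan.volume_fundamentalDomain, show Matrix.of b = B.transpose from Matrix.ext hb,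
      Matrix.det_transpose]

theorem le_encard_sub_of_lt_encard_add {G : Type*} [AddGroup G] [IsAddTorsionFree G]
    {A B : Set G} {ℓ : ℕ} (hA : A.encard ≤ ℓ) (hB : B.encard ≤ ℓ) (h : ℓ < A.encard + B.encard) :
    ℓ ≤ (A - B).encard := by
  classical
  obtain ⟨s, rfl⟩ := (finite_of_encard_le_coe hA).exists_finset_coe
  obtain ⟨t, rfl⟩ := (finite_of_encard_le_coe hB).exists_finset_coe
  rw [← Finset.coe_sub, sub_eq_add_neg]
  simp only [encard_coe_eq_coe_finsetCard] at *
  norm_cast at *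
  have hcd := cauchy_davenport_of_isAddTorsionFree (s := s) (t := -t)
    (Finset.card_pos.1 (by omega)) (Finset.card_pos.1 (by rw [Finset.card_neg]; omega))
  rw [Finset.card_neg] at hcd
  omega

-- Since `toReal ∞ = 0`, the hypothesis `h` says nothing when `a + b = ∞`; that case is separate.
theorem natCast_mul_ofReal_lt_mul_add {ℓ k : ℕ} {d : ℝ} {a b : ℝ≥0∞} (hk : 0 < k) (hd : 0 ≤ d)
    (h : ℓ * d / k < a.toReal + b.toReal) : ℓ * ENNReal.ofReal d < k * (a + b) := by
  rcases eq_or_ne (a + b) ∞ with hab | hab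
  · rw [hab, ENNReal.mul_top (by exact_mod_cast hk.ne')]
    exact ENNReal.mul_lt_top (ENNReal.natCast_lt_top ℓ) ENNReal.ofReal_lt_top
  · obtain ⟨ha, hb⟩ := ENNReal.add_ne_top.1 hab
    rw [← ENNReal.toReal_lt_toReal (by finiteness) (by finiteness), ENNReal.toReal_mul,
      ENNReal.toReal_mul, ENNReal.toReal_add ha hb, ENNReal.toReal_ofReal hd]
    simp only [ENNReal.toReal_natCast]
    rwa [div_lt_iff₀' (by exact_mod_cast hk)] at h

section Periodic

variable {E : Type*} [AddCommGroup E]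

theorem tsum_indicator_sub_eq_encard (V S : Set E) (t : E) :
    ∑' p : V, S.indicator 1 (p - t) = (((t + ·) '' S ∩ V).encard : ℝ≥0∞) := by
  have hS (p : E) : S.indicator (1 : E → ℝ≥0∞) (p - t) = ((t + ·) '' S).indicator 1 p := by
    rw [image_add_left]
    simp only [neg_add_eq_sub]
    rfl
  simp_rw [hS]
  rw [tsum_subtype V, indicator_indicator, inter_comm, ← tsum_subtype]
  exact ENNReal.tsum_set_one _

variable {L : AddSubgroup E} {ι : Type*} [Fintype ι] {v : ι → E} {V : Set E}

theorem tsum_subtype_eq_sum_tsum_add (hv : ∀ i j, i ≠ j → v i - v j ∉ L)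
    (hV : V = ⋃ i, (v i + ·) '' L) (f : E → ℝ≥0∞) :
    ∑' p : V, f p = ∑ i, ∑' x : L, f (v i + x) := by
  have hmem (p : ι × L) : v p.1 + p.2 ∈ V := hV ▸ mem_iUnion.2 ⟨p.1, p.2, p.2.2, rfl⟩
  let e : ι × L ≃ V := Equiv.ofBijective (fun p => ⟨v p.1 + p.2, hmem p⟩) <| by
    refine ⟨fun ⟨i, x⟩ ⟨j, y⟩ hxy => ?_, fun ⟨p, hp⟩ => ?_⟩
    · have hxy : v i + x = v j + y := congrArg Subtype.val hxy
      obtain rfl : i = j := by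
        by_contra hij
        refine hv i j hij ?_
        rw [show v i - v j = y - x by rw [sub_eq_sub_iff_add_eq_add, hxy, add_comm]]
        exact sub_mem y.2 x.2
      simpa using hxy
    · obtain ⟨i, x, hx, rfl⟩ := mem_iUnion.1 (hV ▸ hp)
      exact ⟨(i, ⟨x, hx⟩), rfl⟩
  rw [← e.tsum_eq, ENNReal.tsum_prod', tsum_fintype]
  rfl

variable [MeasurableSpace E] [MeasurableAdd E] [MeasurableNeg E] {μ : Measure E}
  [μ.IsAddLeftInvariant] [μ.IsNegInvariant] [Countable L] {F : Set E}

theorem tsum_setLIntegral_indicator_add_sub (hF : IsAddFundamentalDomain L F μ) (a : E)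
    {S : Set E} (hS : MeasurableSet S) :
    ∑' x : L, ∫⁻ t in F, S.indicator 1 (a + x - t) ∂μ = μ S := by
  rw [← lintegral_indicator_one hS, ← lintegral_sub_left_eq_self _ a, hF.lintegral_eq_tsum']
  refine tsum_congr fun x => lintegral_congr fun t => ?_
  rw [AddSubgroup.vadd_def, vadd_eq_add, AddSubgroup.coe_neg, sub_add_eq_sub_sub, sub_neg_eq_add]

theorem setLIntegral_encard_inter_eq (hF : IsAddFundamentalDomain L F μ)
    (hv : ∀ i j, i ≠ j → v i - v j ∉ L) (hV : V = ⋃ i, (v i + ·) '' L)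
    {S : Set E} (hS : MeasurableSet S) :
    ∫⁻ t in F, (((t + ·) '' S ∩ V).encard : ℝ≥0∞) ∂μ = Fintype.card ι * μ S := by
  have hmeas (c : E) : Measurable fun t => S.indicator (1 : E → ℝ≥0∞) (c - t) := by
    simp_rw [sub_eq_add_neg]
    exact (measurable_one.indicator hS).comp (measurable_neg.const_add c)
  have : Countable V := hV ▸ (countable_iUnion fun i => (L : Set E).to_countable.image _).to_subtype
  simp_rw [← tsum_indicator_sub_eq_encard]
  rw [lintegral_tsum fun p : V => (hmeas p).aemeasurable,
    tsum_subtype_eq_sum_tsum_add hv hV fun p => ∫⁻ t in F, S.indicator 1 (p - t) ∂μ]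
  simp [tsum_setLIntegral_indicator_add_sub hF _ hS]

theorem exists_lt_encard_inter_add_encard_inter (hF : IsAddFundamentalDomain L F μ)
    (hv : ∀ i j, i ≠ j → v i - v j ∉ L) (hV : V = ⋃ i, (v i + ·) '' L)
    {D₁ D₂ : Set E} (hD₁ : MeasurableSet D₁) (hD₂ : MeasurableSet D₂) {ℓ : ℕ}
    (hvol : ℓ * μ F < Fintype.card ι * (μ D₁ + μ D₂)) :
    ∃ t, (ℓ : ℕ∞) < ((t + ·) '' D₁ ∩ V).encard + ((t + ·) '' D₂ ∩ V).encard := by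
  by_contra! hfew
  refine hvol.not_ge ?_
  calc (Fintype.card ι : ℝ≥0∞) * (μ D₁ + μ D₂)
      = ∫⁻ t in F, (((t + ·) '' D₁ ∩ V).encard : ℝ≥0∞) ∂μ
        + ∫⁻ t in F, (((t + ·) '' D₂ ∩ V).encard : ℝ≥0∞) ∂μ := by
        rw [setLIntegral_encard_inter_eq hF hv hV hD₁, setLIntegral_encard_inter_eq hF hv hV hD₂,
          mul_add]
    _ ≤ ∫⁻ t in F, ((((t + ·) '' D₁ ∩ V).encard + ((t + ·) '' D₂ ∩ V).encard : ℕ∞) : ℝ≥0∞) ∂μ := by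
        simpa only [ENat.toENNReal_add] using le_lintegral_add _ _
    _ ≤ ∫⁻ _ in F, (ℓ : ℝ≥0∞) ∂μ := lintegral_mono fun t => by simpa using ENat.toENNReal_le.2 (hfew t)
    _ = ℓ * μ F := setLIntegral_const F _

end Periodic

theorem stmt_8_general {n k : ℕ} (hk : 0 < k) (B : Matrix (Fin n) (Fin n) ℝ) (hB : B.det ≠ 0)
    (v : Fin k → (Fin n → ℝ))
    (hv : ∀ i j : Fin k, i ≠ j → v i - v j ∉ latticeOf B)
    (V : Set (Fin n → ℝ)) (hV : V = ⋃ i : Fin k, (fun w => v i + w) '' latticeOf B)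
    (ℓ : ℕ)
    (D₁ D₂ : Set (Fin n → ℝ))
    (hD₁m : MeasurableSet D₁)
    (hD₂m : MeasurableSet D₂)
    (hvol : (ℓ : ℝ) * |B.det| / k < (volume D₁).toReal + (volume D₂).toReal)
    (hfew₁ : ∀ z : Fin n → ℝ, (((fun x => z + x) '' D₁) ∩ V).encard ≤ (ℓ : ℕ∞))
    (hfew₂ : ∀ z : Fin n → ℝ, (((fun x => z + x) '' D₂) ∩ V).encard ≤ (ℓ : ℕ∞)) :
    ∀ z : Fin n → ℝ,
      ((ℓ : ℕ) : ℕ∞) ≤ (((fun x => z + x) '' (D₁ - D₂)) ∩ (V - V)).encard := by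
  intro z
  obtain ⟨b, hspan, hvolF⟩ := exists_basis_span_eq_latticeOf hB
  rw [← hspan] at hv hV
  have : Countable (Submodule.span ℤ (range b)).toAddSubgroup :=
    inferInstanceAs (Countable (Submodule.span ℤ (range b)))
  have hD₁z : (z + ·) '' D₁ = (-z + ·) ⁻¹' D₁ := image_add_left
  have hvol' : ℓ * volume (ZSpan.fundamentalDomain b)
      < Fintype.card (Fin k) * (volume ((z + ·) '' D₁) + volume D₂) := by
    rw [hvolF, Fintype.card_fin, hD₁z, measure_preimage_add]
    exact natCast_mul_ofReal_lt_mul_add hk (abs_nonneg _) hvol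
  obtain ⟨t, ht⟩ := exists_lt_encard_inter_add_encard_inter
    (ZSpan.isAddFundamentalDomain' b volume) hv hV (hD₁z ▸ measurable_const_add _ hD₁m) hD₂m hvol'
  have hfew₁' : ((t + ·) '' ((z + ·) '' D₁) ∩ V).encard ≤ ℓ := by
    simpa only [← image_comp, Function.comp_def, ← add_assoc] using hfew₁ (t + z)
  refine (le_encard_sub_of_lt_encard_add hfew₁' (hfew₂ t) ht).trans (encard_mono ?_)
  rintro _ ⟨_, ⟨⟨_, ⟨d₁, hd₁, rfl⟩, rfl⟩, hp⟩, _, ⟨⟨d₂, hd₂, rfl⟩, hq⟩, rfl⟩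
  exact ⟨⟨d₁ - d₂, sub_mem_sub hd₁ hd₂, by dsimp only; abel⟩, sub_mem_sub hp hq⟩

/-- Inhomogeneous covering theorem: if `vol(D₁)+vol(D₂) > ℓ·det(Λ)/k` and no translate
of `D₁` or `D₂` contains more than `ℓ` points of `V`, then every translate of
`D₁ - D₂` contains at least `ℓ` points of `V - V`. -/
theorem stmt_8 {n k : ℕ} (hk : 0 < k) (B : Matrix (Fin n) (Fin n) ℝ) (hB : B.det ≠ 0)
    (v : Fin k → (Fin n → ℝ))
    (hv : ∀ i j : Fin k, i ≠ j → v i - v j ∉ latticeOf B)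
    (V : Set (Fin n → ℝ)) (hV : V = ⋃ i : Fin k, (fun w => v i + w) '' latticeOf B)
    (ℓ : ℕ) (hℓ : 1 ≤ ℓ)
    (D₁ D₂ : Set (Fin n → ℝ))
    (hD₁b : Bornology.IsBounded D₁) (hD₁m : MeasurableSet D₁)
    (hD₂b : Bornology.IsBounded D₂) (hD₂m : MeasurableSet D₂)
    (hvol : (ℓ : ℝ) * |B.det| / k < (volume D₁).toReal + (volume D₂).toReal)
    (hfew₁ : ∀ z : Fin n → ℝ, (((fun x => z + x) '' D₁) ∩ V).encard ≤ (ℓ : ℕ∞))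
    (hfew₂ : ∀ z : Fin n → ℝ, (((fun x => z + x) '' D₂) ∩ V).encard ≤ (ℓ : ℕ∞)) :
    ∀ z : Fin n → ℝ,
      ((ℓ : ℕ) : ℕ∞) ≤ (((fun x => z + x) '' (D₁ - D₂)) ∩ (V - V)).encard :=
  stmt_8_general hk B hB v hv V hV ℓ D₁ D₂ hD₁m hD₂m hvol hfew₁ hfew₂
end

section
/- The vertex set of the (6³) hexagonal tiling satisfies H − H = H ∪ (−H): with Λ the lattice generated by (3/2, √3/2) and (0, √3), and H = Λ ∪ ((1,0) + Λ), one has {u − w : u, w ∈ H} = H ∪ {−h : h ∈ H}. -/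
open Set Pointwise

/-- The period lattice of the unit-edge regular hexagonal tiling, with basis
`(3/2, √3/2)` and `(0, √3)`. -/
def hexLattice : Set (Fin 2 → ℝ) :=
  {x | ∃ a b : ℤ, x = (a : ℝ) • ![3 / 2, Real.sqrt 3 / 2] + (b : ℝ) • ![0, Real.sqrt 3]}

/-- The vertex set of the edge-to-edge tiling of the plane by unit regular hexagons. -/
def hexVertices : Set (Fin 2 → ℝ) :=
  hexLattice ∪ (fun w => ![1, 0] + w) '' hexLattice

/-- A coset union `S = L ∪ (v + L)` of an additive subgroup: every difference of two points
of `S` lies in `L`, `v + L` or `-v + L`, and the last is `-(v + L)`. -/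
theorem AddSubgroup.union_vadd_sub_self {G : Type*} [AddCommGroup G] (L : AddSubgroup G)
    (v : G) :
    ((L : Set G) ∪ (v +ᵥ (L : Set G))) - ((L : Set G) ∪ (v +ᵥ (L : Set G))) =
      ((L : Set G) ∪ (v +ᵥ (L : Set G))) ∪ -((L : Set G) ∪ (v +ᵥ (L : Set G))) := by
  ext x
  simp only [mem_sub, mem_union, mem_neg, mem_vadd_set, SetLike.mem_coe, vadd_eq_add]
  constructor
  · rintro ⟨u, hu | ⟨l, hl, rfl⟩, w, hw | ⟨m, hm, rfl⟩, rfl⟩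
    · exact Or.inl (Or.inl (L.sub_mem hu hw))
    · exact Or.inr (Or.inr ⟨m - u, L.sub_mem hm hu, by abel⟩)
    · exact Or.inl (Or.inr ⟨l - w, L.sub_mem hl hw, by abel⟩)
    · exact Or.inl (Or.inl (by simpa using L.sub_mem hl hm))
  · rintro (hx | hx)
    · exact ⟨x, hx, 0, Or.inl L.zero_mem, sub_zero x⟩
    · exact ⟨0, Or.inl L.zero_mem, -x, hx, by simp⟩

def hexLatticeAddSubgroup : AddSubgroup (Fin 2 → ℝ) where
  carrier := hexLattice
  zero_mem' := ⟨0, 0, by simp⟩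
  add_mem' := by
    rintro _ _ ⟨a, b, rfl⟩ ⟨c, d, rfl⟩
    exact ⟨a + c, b + d, by push_cast; module⟩
  neg_mem' := by
    rintro _ ⟨a, b, rfl⟩
    exact ⟨-a, -b, by push_cast; module⟩

theorem hexVertices_eq_union_vadd :
    hexVertices = (hexLatticeAddSubgroup : Set (Fin 2 → ℝ)) ∪
      ((![1, 0] : Fin 2 → ℝ) +ᵥ (hexLatticeAddSubgroup : Set (Fin 2 → ℝ))) :=
  rfl

/-- The vertex set `H` of the `(6³)` tiling satisfies `H - H = H ∪ (-H)`. -/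
theorem stmt_14 : hexVertices - hexVertices = hexVertices ∪ (-hexVertices) := by
  rw [hexVertices_eq_union_vadd]
  exact hexLatticeAddSubgroup.union_vadd_sub_self ![1, 0]
end

section
/- Scaled fundamental cells give a difference-set covering: Let Λ ⊆ ℝ^n be a full-rank lattice, V = ⋃_{i=1}^k (v_i + Λ) a discrete lattice-periodic set with pairwise distinct cosets, let P and Q be half-open fundamental cells of Λ (with respect to possibly different bases), and let 0 < ε < 1 be sufficiently small so that (1−ε)^n · 2 > 1. Then every translate of (1−ε)(P − Q) contains at least k points of V − V. -/
open MeasureTheory Set Pointwise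

/-- The half-open fundamental cell of the lattice `B·ℤⁿ`. -/
def cellOf {n : ℕ} (B : Matrix (Fin n) (Fin n) ℝ) : Set (Fin n → ℝ) :=
  {x | ∃ m : Fin n → ℝ, (∀ i, m i ∈ Set.Ico (0 : ℝ) 1) ∧ x = B.mulVec m}

namespace Stmt17Aux

variable {n : ℕ}

/-- The lattice map. -/
noncomputable def latF (B : Matrix (Fin n) (Fin n) ℝ) (m : Fin n → ℤ) : Fin n → ℝ :=
  B.mulVec (fun i => (m i : ℝ))

lemma latF_mem (B : Matrix (Fin n) (Fin n) ℝ) (m : Fin n → ℤ) : latF B m ∈ latticeOf B :=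
  ⟨m, rfl⟩

lemma latF_sub (B : Matrix (Fin n) (Fin n) ℝ) (a b : Fin n → ℤ) :
    latF B (a - b) = latF B a - latF B b := by
  have h : (fun i => (((a - b) i : ℤ) : ℝ)) = (fun i => (a i : ℝ)) - fun i => (b i : ℝ) := by
    funext i
    simp
  rw [latF, h, Matrix.mulVec_sub]
  rfl

lemma latF_neg (B : Matrix (Fin n) (Fin n) ℝ) (a : Fin n → ℤ) :
    latF B (-a) = - latF B a := by
  have h : (fun i => (((-a) i : ℤ) : ℝ)) = -fun i => (a i : ℝ) := by
    funext i
    simp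
  rw [latF, h, Matrix.mulVec_neg]
  rfl

lemma mulVec_inj {B : Matrix (Fin n) (Fin n) ℝ} (hB : B.det ≠ 0) {x y : Fin n → ℝ}
    (h : B.mulVec x = B.mulVec y) : x = y := by
  have hu : IsUnit B.det := isUnit_iff_ne_zero.2 hB
  have h2 := congrArg (fun v => B⁻¹.mulVec v) h
  simpa [Matrix.mulVec_mulVec, Matrix.nonsing_inv_mul B hu, Matrix.one_mulVec] using h2

lemma exists_decomp {B : Matrix (Fin n) (Fin n) ℝ} (hB : B.det ≠ 0) (x : Fin n → ℝ) :
    ∃ (m : Fin n → ℤ) (p : Fin n → ℝ), (∀ i, p i ∈ Set.Ico (0 : ℝ) 1) ∧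
      x = latF B m + B.mulVec p := by
  have hu : IsUnit B.det := isUnit_iff_ne_zero.2 hB
  set t := B⁻¹.mulVec x with ht
  refine ⟨fun i => ⌊t i⌋, fun i => Int.fract (t i),
    fun i => ⟨Int.fract_nonneg _, Int.fract_lt_one _⟩, ?_⟩
  have hsum : (fun i => ((⌊t i⌋ : ℤ) : ℝ)) + (fun i => Int.fract (t i)) = t := by
    funext i
    exact Int.floor_add_fract (t i)
  rw [latF, ← Matrix.mulVec_add, hsum, ht, Matrix.mulVec_mulVec,
    Matrix.mul_nonsing_inv B hu, Matrix.one_mulVec]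

lemma decomp_unique {B : Matrix (Fin n) (Fin n) ℝ} (hB : B.det ≠ 0)
    {a b : Fin n → ℤ} {p q : Fin n → ℝ}
    (hp : ∀ i, p i ∈ Set.Ico (0 : ℝ) 1) (hq : ∀ i, q i ∈ Set.Ico (0 : ℝ) 1)
    (h : latF B a + B.mulVec p = latF B b + B.mulVec q) : a = b ∧ p = q := by
  have h' : B.mulVec ((fun i => (a i : ℝ)) + p) = B.mulVec ((fun i => (b i : ℝ)) + q) := by
    rw [Matrix.mulVec_add, Matrix.mulVec_add]; exact h
  have h2 := mulVec_inj hB h'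
  have hab : a = b := by
    funext i
    have hi : (a i : ℝ) + p i = (b i : ℝ) + q i := congrFun h2 i
    have h3 : ((a i - b i : ℤ) : ℝ) = q i - p i := by push_cast; linarith
    have h4 : ((a i - b i : ℤ) : ℝ) < 1 := by
      rw [h3]; have := (hq i).2; have := (hp i).1; linarith
    have h5 : (-1 : ℝ) < ((a i - b i : ℤ) : ℝ) := by
      rw [h3]; have := (hq i).1; have := (hp i).2; linarith
    have h4' : a i - b i < 1 := by exact_mod_cast h4
    have h5' : (-1 : ℤ) < a i - b i := by exact_mod_cast h5
    omega
  refine ⟨hab, ?_⟩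
  subst hab
  funext i
  have hi : (a i : ℝ) + p i = (a i : ℝ) + q i := congrFun h2 i
  linarith

/-- box `[0,1)^n` -/
def box (n : ℕ) : Set (Fin n → ℝ) := Set.pi Set.univ fun _ => Set.Ico (0 : ℝ) 1

lemma measurableSet_box : MeasurableSet (box n) :=
  MeasurableSet.univ_pi fun _ => measurableSet_Ico

lemma volume_box : volume (box n) = 1 := by
  rw [box, volume_pi_pi]
  simp

lemma cellOf_eq (B : Matrix (Fin n) (Fin n) ℝ) :
    cellOf B = (Matrix.toLin' B) '' box n := by
  ext x
  constructor
  · rintro ⟨m, hm, rfl⟩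
    exact ⟨m, by simpa [box] using hm, by simp [Matrix.toLin'_apply]⟩
  · rintro ⟨m, hm, rfl⟩
    exact ⟨m, by simpa [box] using hm, by simp [Matrix.toLin'_apply]⟩

lemma measurableSet_cell {B : Matrix (Fin n) (Fin n) ℝ} (hB : B.det ≠ 0) :
    MeasurableSet (cellOf B) := by
  rw [cellOf_eq]
  have hf : LinearMap.det (Matrix.toLin' B) ≠ 0 := by rwa [LinearMap.det_toLin']
  let g := ((Matrix.toLin' B).equivOfDetNeZero hf).toContinuousLinearEquiv
  have himg : (Matrix.toLin' B) '' box n = g '' box n := rfl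
  rw [himg, g.image_eq_preimage_symm]
  exact g.symm.continuous.measurable measurableSet_box

lemma volume_cell (B : Matrix (Fin n) (Fin n) ℝ) :
    volume (cellOf B) = ENNReal.ofReal |B.det| := by
  rw [cellOf_eq, Measure.addHaar_image_linearMap, LinearMap.det_toLin', volume_box, mul_one]

lemma measurableSet_smul {r : ℝ} (hr : r ≠ 0) {s : Set (Fin n → ℝ)} (hs : MeasurableSet s) :
    MeasurableSet (r • s) := by
  rw [← Set.preimage_smul_inv₀ hr]
  exact measurable_const_smul _ hs

lemma volume_smul {r : ℝ} (hr : 0 ≤ r) (s : Set (Fin n → ℝ)) :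
    volume (r • s) = ENNReal.ofReal (r ^ n) * volume s := by
  rw [Measure.addHaar_smul_of_nonneg volume hr, Module.finrank_fintype_fun_eq_card,
    Fintype.card_fin]

lemma measure_image_add (a : Fin n → ℝ) (s : Set (Fin n → ℝ)) :
    volume ((fun x => a + x) '' s) = volume s := by
  rw [Set.image_add_left, measure_preimage_add]

lemma smul_cell_subset {B : Matrix (Fin n) (Fin n) ℝ} {r : ℝ} (hr0 : 0 ≤ r) (hr1 : r ≤ 1) :
    r • cellOf B ⊆ cellOf B := by
  rintro x ⟨y, ⟨m, hm, rfl⟩, rfl⟩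
  refine ⟨r • m, fun i => ?_, ?_⟩
  · have h0 := (hm i).1
    have h1 := (hm i).2
    refine ⟨mul_nonneg hr0 h0, ?_⟩
    calc r * m i ≤ 1 * m i := by nlinarith
      _ < 1 := by linarith
  · simp [Matrix.mulVec_smul]

/-- Key measure-theoretic lemma: some lattice translate of `c` lies in `r•P - r•Q`. -/
lemma key {B C : Matrix (Fin n) (Fin n) ℝ} (hB : B.det ≠ 0) (hC : C.det ≠ 0)
    (hBC : latticeOf C = latticeOf B) (hdet : |B.det| ≤ |C.det|)
    {r : ℝ} (hr0 : 0 < r) (hr1 : r ≤ 1) (hrn : 1 < r ^ n * 2) (c : Fin n → ℝ) :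
    ∃ m : Fin n → ℤ, c + latF B m ∈ r • cellOf B - r • cellOf C := by
  classical
  set P := cellOf B with hP
  set Q := cellOf C with hQ
  have hr0' : (0 : ℝ) ≤ r := hr0.le
  have hrne : r ≠ 0 := hr0.ne'
  have hPm : MeasurableSet P := measurableSet_cell hB
  have hQm : MeasurableSet Q := measurableSet_cell hC
  have hrPm : MeasurableSet (r • P) := measurableSet_smul hrne hPm
  have hrQm : MeasurableSet (r • Q) := measurableSet_smul hrne hQm
  set T : (Fin n → ℤ) → Set (Fin n → ℝ) :=
    fun m => (fun x => (c + latF B m) + x) '' (r • Q) with hT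
  have hTm : ∀ m, MeasurableSet (T m) := by
    intro m
    rw [hT]
    simp only [Set.image_add_left]
    exact measurable_const_add _ hrQm
  have hrQ_sub : r • Q ⊆ Q := smul_cell_subset hr0' hr1
  have hrP_sub : r • P ⊆ P := smul_cell_subset hr0' hr1
  have hT_disj : Pairwise (Function.onFun Disjoint T) := by
    intro m m' hmm
    rw [Function.onFun, Set.disjoint_left]
    rintro x ⟨y, hy, rfl⟩ ⟨y', hy', hxx⟩
    obtain ⟨q, hq, rfl⟩ := hrQ_sub hy
    obtain ⟨q', hq', rfl⟩ := hrQ_sub hy'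
    have heq : latF B m + C.mulVec q = latF B m' + C.mulVec q' := by
      have h2 : c + (latF B m + C.mulVec q) = c + (latF B m' + C.mulVec q') := by
        rw [← add_assoc, ← add_assoc]; exact hxx.symm
      exact add_left_cancel h2
    obtain ⟨a, ha⟩ : latF B m ∈ latticeOf C := hBC ▸ latF_mem B m
    obtain ⟨a', ha'⟩ : latF B m' ∈ latticeOf C := hBC ▸ latF_mem B m'
    have heq' : latF C a + C.mulVec q = latF C a' + C.mulVec q' := by
      show C.mulVec (fun i => (a i : ℝ)) + _ = C.mulVec (fun i => (a' i : ℝ)) + _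
      rw [← ha, ← ha']; exact heq
    have haa : a = a' := (decomp_unique hC hq hq' heq').1
    have hlat : latF B m = latF B m' := by rw [ha, ha', haa]
    have hfr : (fun i => ((m i : ℤ) : ℝ)) = fun i => ((m' i : ℤ) : ℝ) := mulVec_inj hB hlat
    apply hmm
    funext i
    have := congrFun hfr i
    exact_mod_cast this
  set pre : (Fin n → ℤ) → Set (Fin n → ℝ) :=
    fun m => (fun x => (c + latF B m) + x) ⁻¹' P with hpre
  have hpre_m : ∀ m, MeasurableSet (pre m) := fun m => measurable_const_add _ hPm
  have hpre_disj : Pairwise (Function.onFun Disjoint pre) := by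
    intro m m' hmm
    rw [Function.onFun, Set.disjoint_left]
    intro x hx hx'
    obtain ⟨p, hp, hpe⟩ := hx
    obtain ⟨p', hp', hpe'⟩ := hx'
    have heq : latF B m' + B.mulVec p = latF B m + B.mulVec p' := by
      rw [← hpe, ← hpe']
      simp only [add_comm, add_left_comm, add_assoc]
    exact hmm ((decomp_unique hB hp hp' heq).1.symm)
  have hpre_cover : (⋃ m, pre m) = Set.univ := by
    apply Set.eq_univ_of_forall
    intro x
    obtain ⟨m0, p, hp, hx⟩ := exists_decomp hB (c + x)
    refine Set.mem_iUnion.2 ⟨-m0, ?_⟩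
    show c + latF B (-m0) + x ∈ P
    refine ⟨p, hp, ?_⟩
    rw [latF_neg]
    calc c + -latF B m0 + x = (c + x) - latF B m0 := by abel
      _ = B.mulVec p := by rw [hx]; abel
  have hTP_eq : ∀ m, volume (T m ∩ P) = volume ((r • Q) ∩ pre m) := by
    intro m
    show volume ((fun x => (c + latF B m) + x) '' (r • Q) ∩ P) = _
    rw [← Set.image_inter_preimage, measure_image_add]
  have hUnion_meas : ∀ m, MeasurableSet (T m ∩ P) := fun m => (hTm m).inter hPm
  set S := (⋃ m, T m ∩ P) with hSdef
  have hS_eq : volume S = ∑' m : Fin n → ℤ, volume (T m ∩ P) := by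
    refine measure_iUnion ?_ hUnion_meas
    exact fun m m' h =>
      ((hT_disj h).mono Set.inter_subset_left Set.inter_subset_left)
  have hsum2 : ∑' m : Fin n → ℤ, volume ((r • Q) ∩ pre m)
      = volume (⋃ m, (r • Q) ∩ pre m) := by
    symm
    refine measure_iUnion ?_ (fun m => hrQm.inter (hpre_m m))
    exact fun m m' h =>
      ((hpre_disj h).mono Set.inter_subset_right Set.inter_subset_right)
  have hcov2 : (⋃ m, (r • Q) ∩ pre m) = r • Q := by
    rw [← Set.inter_iUnion, hpre_cover, Set.inter_univ]
  have hSvol : volume S = ENNReal.ofReal (r ^ n) * ENNReal.ofReal |C.det| := by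
    rw [hS_eq]
    calc ∑' m : Fin n → ℤ, volume (T m ∩ P)
        = ∑' m : Fin n → ℤ, volume ((r • Q) ∩ pre m) := by
          exact tsum_congr hTP_eq
      _ = volume (r • Q) := by rw [hsum2, hcov2]
      _ = _ := by rw [volume_smul hr0', hQ, volume_cell]
  have hS_sub_P : S ⊆ P := by
    rw [hSdef]; exact Set.iUnion_subset fun m => Set.inter_subset_right
  have hS_meas : MeasurableSet S := MeasurableSet.iUnion hUnion_meas
  have hAvol : volume (r • P) = ENNReal.ofReal (r ^ n) * ENNReal.ofReal |B.det| := by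
    rw [volume_smul hr0', hP, volume_cell]
  have hPvol : volume P = ENNReal.ofReal |B.det| := volume_cell B
  have hunion_le : volume (r • P ∪ S) ≤ ENNReal.ofReal |B.det| := by
    rw [← hPvol]
    exact measure_mono (Set.union_subset hrP_sub hS_sub_P)
  have hreal : |B.det| < r ^ n * |B.det| + r ^ n * |C.det| := by
    nlinarith [mul_nonneg (pow_nonneg hr0' n) (sub_nonneg.2 hdet),
      mul_pos (sub_pos.2 hrn) (abs_pos.2 hB)]
  have hkey : volume (r • P ∩ S) ≠ 0 := by
    intro h0
    have heq := measure_union_add_inter (μ := volume) (r • P) hS_meas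
    rw [h0, add_zero] at heq
    have hlt : ENNReal.ofReal |B.det| < volume (r • P) + volume S := by
      rw [hAvol, hSvol, ← ENNReal.ofReal_mul (pow_nonneg hr0' n),
        ← ENNReal.ofReal_mul (pow_nonneg hr0' n),
        ← ENNReal.ofReal_add (by positivity) (by positivity)]
      have hpos : 0 < r ^ n * |B.det| + r ^ n * |C.det| :=
        lt_of_le_of_lt (abs_nonneg _) hreal
      exact (ENNReal.ofReal_lt_ofReal_iff hpos).2 hreal
    rw [← heq] at hlt
    exact absurd hunion_le (not_le.2 hlt)
  obtain ⟨x, hxA, hxS⟩ := nonempty_of_measure_ne_zero hkey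
  obtain ⟨m, hxm⟩ := Set.mem_iUnion.1 hxS
  obtain ⟨y, hy, hxy⟩ := hxm.1
  refine ⟨m, Set.mem_sub.2 ⟨x, hxA, y, hy, ?_⟩⟩
  rw [← hxy]
  simp

lemma det_abs_le {B C : Matrix (Fin n) (Fin n) ℝ} (hC : C.det ≠ 0)
    (hBC : latticeOf C = latticeOf B) : |B.det| ≤ |C.det| := by
  classical
  have hcol : ∀ j, ∃ m : Fin n → ℤ, (fun i => C i j) = B.mulVec (fun i => (m i : ℝ)) := by
    intro j
    have hmem : (fun i => C i j) ∈ latticeOf C := by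
      refine ⟨fun i => if i = j then 1 else 0, ?_⟩
      funext i
      simp [Matrix.mulVec, dotProduct, apply_ite, mul_ite, mul_one, mul_zero,
        Finset.sum_ite_eq, Finset.sum_ite_eq']
    rw [hBC] at hmem
    exact hmem
  choose m hm using hcol
  set U : Matrix (Fin n) (Fin n) ℤ := Matrix.of (fun i j => m j i) with hU
  have hCU : C = B * U.map (fun x : ℤ => (x : ℝ)) := by
    ext i j
    have h2 := congrFun (hm j) i
    simpa [Matrix.mul_apply, Matrix.mulVec, dotProduct, Matrix.map_apply, hU] using h2
  have hmap : ((U.det : ℤ) : ℝ) = (U.map (fun x : ℤ => (x : ℝ))).det := by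
    have := RingHom.map_det (Int.castRingHom ℝ) U
    simpa using this
  have hdet : C.det = B.det * ((U.det : ℤ) : ℝ) := by
    rw [hCU, Matrix.det_mul, hmap]
  have hUne : U.det ≠ 0 := by
    intro h0
    apply hC
    rw [hdet, h0]
    simp
  have h1 : (1 : ℤ) ≤ |U.det| := Int.one_le_abs hUne
  have h1' : (1 : ℝ) ≤ |((U.det : ℤ) : ℝ)| := by
    rw [← Int.cast_abs]
    exact_mod_cast h1
  calc |B.det| = |B.det| * 1 := by ring
    _ ≤ |B.det| * |((U.det : ℤ) : ℝ)| := by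
        exact mul_le_mul_of_nonneg_left h1' (abs_nonneg _)
    _ = |C.det| := by rw [hdet, abs_mul]

end Stmt17Aux

/-- Scaled fundamental cells give a difference-set covering: if `P, Q` are half-open
fundamental cells of `Λ` (w.r.t. possibly different bases) and `(1-ε)ⁿ·2 > 1`, then
every translate of `(1-ε)(P - Q)` contains at least `k` points of `V - V`. -/
theorem stmt_17 {n k : ℕ} (hk : 0 < k) (B C : Matrix (Fin n) (Fin n) ℝ)
    (hB : B.det ≠ 0) (hC : C.det ≠ 0) (hBC : latticeOf C = latticeOf B)
    (v : Fin k → (Fin n → ℝ))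
    (hv : ∀ i j : Fin k, i ≠ j → v i - v j ∉ latticeOf B)
    (V : Set (Fin n → ℝ)) (hV : V = ⋃ i : Fin k, (fun w => v i + w) '' latticeOf B)
    (ε : ℝ) (hε0 : 0 < ε) (hε1 : ε < 1) (hεn : 1 < (1 - ε) ^ n * 2) :
    ∀ z : Fin n → ℝ,
      ((k : ℕ) : ℕ∞) ≤
        (((fun x => z + x) '' ((1 - ε) • (cellOf B - cellOf C))) ∩ (V - V)).encard := by
  intro z
  classical
  set r : ℝ := 1 - ε with hr
  have hr0 : 0 < r := by rw [hr]; linarith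
  have hr1 : r ≤ 1 := by rw [hr]; linarith
  have hdet : |B.det| ≤ |C.det| := Stmt17Aux.det_abs_le hC hBC
  set i0 : Fin k := ⟨0, hk⟩ with hi0
  -- for each i, find a lattice translate
  have hkey : ∀ i : Fin k, ∃ m : Fin n → ℤ,
      (v i - v i0 - z) + Stmt17Aux.latF B m ∈ r • cellOf B - r • cellOf C :=
    fun i => Stmt17Aux.key hB hC hBC hdet hr0 hr1 hεn (v i - v i0 - z)
  choose m hm using hkey
  set d : Fin k → (Fin n → ℝ) := fun i => v i + Stmt17Aux.latF B (m i) - v i0 with hd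
  have hd_mem : ∀ i, d i ∈
      ((fun x => z + x) '' ((1 - ε) • (cellOf B - cellOf C))) ∩ (V - V) := by
    intro i
    have hx1 : d i = z + ((v i - v i0 - z) + Stmt17Aux.latF B (m i)) := by
      simp only [hd]; abel
    constructor
    · refine ⟨(v i - v i0 - z) + Stmt17Aux.latF B (m i), ?_, hx1.symm⟩
      obtain ⟨a, ha, b, hb, hab⟩ := Set.mem_sub.1 (hm i)
      obtain ⟨p, hp, rfl⟩ := ha
      obtain ⟨q, hq, rfl⟩ := hb
      rw [← hab, ← smul_sub]
      exact Set.smul_mem_smul_set (Set.sub_mem_sub hp hq)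
    · refine Set.mem_sub.2 ⟨v i + Stmt17Aux.latF B (m i), ?_, v i0, ?_, by simp only [hd]⟩
      · rw [hV]
        exact Set.mem_iUnion.2 ⟨i, ⟨Stmt17Aux.latF B (m i), Stmt17Aux.latF_mem B (m i), rfl⟩⟩
      · rw [hV]
        refine Set.mem_iUnion.2 ⟨i0, ⟨0, ⟨0, ?_⟩, by simp⟩⟩
        funext j
        simp [Matrix.mulVec]
  have hd_inj : Function.Injective d := by
    intro i j hij
    by_contra hne
    apply hv i j hne
    have h3 : v i + Stmt17Aux.latF B (m i) - v i0 = v j + Stmt17Aux.latF B (m j) - v i0 := by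
      simpa only [hd] using hij
    have h4 : v i + Stmt17Aux.latF B (m i) = v j + Stmt17Aux.latF B (m j) :=
      sub_left_inj.mp h3
    have h1 : v i - v j = Stmt17Aux.latF B (m j) - Stmt17Aux.latF B (m i) := by
      calc v i - v j = (v i + Stmt17Aux.latF B (m i)) - Stmt17Aux.latF B (m i) - v j := by abel
        _ = (v j + Stmt17Aux.latF B (m j)) - Stmt17Aux.latF B (m i) - v j := by rw [h4]
        _ = Stmt17Aux.latF B (m j) - Stmt17Aux.latF B (m i) := by abel
    rw [h1, ← Stmt17Aux.latF_sub]
    exact Stmt17Aux.latF_mem B _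
  calc ((k : ℕ) : ℕ∞) = (Set.range d).encard := by
        rw [← Set.image_univ, Set.InjOn.encard_image (hd_inj.injOn),
          Set.encard_univ, ENat.card_eq_coe_fintype_card, Fintype.card_fin]
    _ ≤ _ := Set.encard_le_encard (Set.range_subset_iff.2 hd_mem)
end

section
/- If Λ ⊆ ℝ^n is a full-rank lattice, V = ⋃_{i=1}^k (v_i + Λ) with pairwise distinct cosets, and D₁, D₂ ⊆ ℝ^n are bounded measurable sets with vol(D₁) + vol(D₂) > det(Λ)/k such that every translate of D₁ and of D₂ contains at most one point of V, then (D₁ − D₂) + (V − V) = ℝ^n. -/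
/-
Let `L = B ℤⁿ` with fundamental domain `F`. The hypothesis on translates of `Dᵢ` says that the
translates `p + Dᵢ`, `p ∈ V`, are pairwise disjoint; since `V` is a union of `k` distinct cosets
of `L`, the set `(V + Dᵢ) ∩ F` is the disjoint union of the pieces of the `k` sets `vⱼ + Dᵢ` cut
by the translates of `F`, so it has measure `k vol(Dᵢ)`. Given `x`, the sets `(V + D₁) ∩ F` and
`(V + (x + D₂)) ∩ F` therefore have total measure `k (vol D₁ + vol D₂) > det L = vol F`, so they
meet: `p + d₁ = q + x + d₂`, i.e. `x = (d₁ - d₂) + (p - q)`.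
-/

open MeasureTheory Set Pointwise

open Submodule

namespace Matrix

variable {n : ℕ} (B : Matrix (Fin n) (Fin n) ℝ) (hB : B.det ≠ 0)

noncomputable def colBasis : Module.Basis (Fin n) ℝ (Fin n → ℝ) :=
  basisOfLinearIndependentOfCardEqFinrank' B.col (linearIndependent_cols_of_det_ne_zero hB)
    (by simp)

@[simp]
lemma coe_colBasis : ⇑(B.colBasis hB) = B.col :=
  coe_basisOfLinearIndependentOfCardEqFinrank' ..

lemma volume_fundamentalDomain_colBasis :
    volume (ZSpan.fundamentalDomain (B.colBasis hB)) = ENNReal.ofReal |B.det| := by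
  rw [ZSpan.volume_fundamentalDomain, coe_colBasis, col]
  exact congrArg (ENNReal.ofReal ∘ abs) (det_transpose B)

end Matrix

lemma latticeOf_eq_span_colBasis {n : ℕ} (B : Matrix (Fin n) (Fin n) ℝ) (hB : B.det ≠ 0) :
    latticeOf B = span ℤ (range (B.colBasis hB)) := by
  ext x
  rw [SetLike.mem_coe, mem_span_range_iff_exists_fun]
  simp only [latticeOf, mem_ofPred_eq, Matrix.mulVec_eq_sum, op_smul_eq_smul,
    Int.cast_smul_eq_zsmul, Matrix.coe_colBasis, Matrix.col, eq_comm]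

section Packing

variable {G : Type*} [AddCommGroup G]

lemma mem_sub_add_sub_of_mem_add_of_mem_add_vadd {V D₁ D₂ : Set G} {x y : G}
    (h₁ : y ∈ V + D₁) (h₂ : y ∈ V + (x +ᵥ D₂)) : x ∈ (D₁ - D₂) + (V - V) := by
  obtain ⟨p, hp, d₁, hd₁, rfl⟩ := h₁
  obtain ⟨q, hq, _, ⟨d₂, hd₂, rfl⟩, hy⟩ := h₂
  simp only [vadd_eq_add] at hy
  have hx : x = (d₁ - d₂) + (p - q) :=
    calc x = q + (x + d₂) - (q + d₂) := by abel
      _ = (d₁ - d₂) + (p - q) := by rw [hy]; abel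
  exact hx ▸ add_mem_add (sub_mem_sub hd₁ hd₂) (sub_mem_sub hp hq)

lemma pairwiseDisjoint_vadd_vadd_of_encard_inter_le_one {V D : Set G}
    (h : ∀ z : G, ((fun x => z + x) '' D ∩ V).encard ≤ 1) (x : G) :
    V.PairwiseDisjoint (· +ᵥ (x +ᵥ D)) := by
  intro p hp q hq hpq
  rw [Function.onFun, Set.disjoint_left]
  rintro _ ⟨_, ⟨d, hd, rfl⟩, rfl⟩ ⟨_, ⟨d', hd', rfl⟩, hdd'⟩
  simp only [vadd_eq_add] at hdd'
  -- `p` and `q` both lie in the translate `(q - d) + D`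
  have hp' : (q - d) + d' ∈ (fun y => (q - d) + y) '' D ∩ V := by
    have hpd : (q - d) + d' = p :=
      calc (q - d) + d' = q + (x + d') - (x + d) := by abel
        _ = p := by rw [hdd']; abel
    exact ⟨mem_image_of_mem _ hd', hpd ▸ hp⟩
  have hq' : (q - d) + d ∈ (fun y => (q - d) + y) '' D ∩ V := by
    refine ⟨mem_image_of_mem _ hd, ?_⟩
    rwa [sub_add_cancel]
  refine hpq ?_
  obtain rfl : d' = d := add_left_cancel (Set.encard_le_one_iff.mp (h (q - d)) _ _ hp' hq')
  exact (add_right_cancel hdd').symm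

variable [MeasurableSpace G] [MeasurableAdd G]

lemma Set.Countable.measurableSet_add {V D : Set G} (hV : V.Countable) (hD : MeasurableSet D) :
    MeasurableSet (V + D) := by
  rw [← vadd_eq_add, ← iUnion_vadd_set]
  exact .biUnion hV fun p _ => hD.const_vadd p

variable {μ : Measure G} [μ.IsAddLeftInvariant] {L : AddSubgroup G} [Countable L] {F : Set G}

lemma MeasureTheory.IsAddFundamentalDomain.measure_iUnion_vadd_add_inter {ι : Type*} [Fintype ι]
    (hF : IsAddFundamentalDomain L F μ) (v : ι → G) (hv : Pairwise fun i j => v i - v j ∉ L)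
    {D : Set G} (hD : MeasurableSet D)
    (hpack : (⋃ i, v i +ᵥ (L : Set G)).PairwiseDisjoint (· +ᵥ D)) :
    μ (((⋃ i, v i +ᵥ (L : Set G)) + D) ∩ F) = Fintype.card ι * μ D := by
  have hinj : Function.Injective fun p : ι × L => v p.1 + p.2 := by
    rintro ⟨i, g⟩ ⟨j, g'⟩ h
    obtain rfl : i = j := by
      by_contra hij
      refine hv hij ?_
      rw [sub_eq_sub_iff_add_eq_add.mpr (h.trans (add_comm _ _))]
      exact sub_mem g'.2 g.2
    exact Prod.ext rfl (Subtype.ext (add_left_cancel h))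
  have hdisj : Pairwise (Function.onFun Disjoint fun p : ι × L => (v p.1 + p.2) +ᵥ D) :=
    hpack.on_injective hinj fun p => mem_iUnion.2 ⟨p.1, vadd_mem_vadd_set p.2.2⟩
  have hunion : (⋃ i, v i +ᵥ (L : Set G)) + D = ⋃ p : ι × L, (v p.1 + p.2) +ᵥ D := by
    ext y
    simp [mem_add, mem_vadd_set]
  calc μ (((⋃ i, v i +ᵥ (L : Set G)) + D) ∩ F)
      = ∑' p : ι × L, μ (((v p.1 + p.2) +ᵥ D) ∩ F) := by
        rw [hunion, iUnion_inter]
        refine measure_iUnion₀ (fun p p' hpp' => ?_) fun p =>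
          (hD.const_vadd _).nullMeasurableSet.inter hF.nullMeasurableSet
        exact ((hdisj hpp').mono inter_subset_left inter_subset_left).aedisjoint
    _ = ∑ i, ∑' g : L, μ ((g +ᵥ (v i +ᵥ D)) ∩ F) := by
        rw [ENNReal.tsum_prod', tsum_fintype]
        simp only [vadd_vadd, AddSubgroup.vadd_def, add_comm]
    _ = Fintype.card ι * μ D := by
        simp [← hF.measure_eq_tsum, measure_vadd]

end Packing

/-- The `ℓ = 1` case of the inhomogeneous covering theorem:
`(D₁ - D₂) + (V - V)` covers `ℝⁿ`. -/
theorem stmt_18 {n k : ℕ} (hk : 0 < k) (B : Matrix (Fin n) (Fin n) ℝ) (hB : B.det ≠ 0)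
    (v : Fin k → (Fin n → ℝ))
    (hv : ∀ i j : Fin k, i ≠ j → v i - v j ∉ latticeOf B)
    (V : Set (Fin n → ℝ)) (hV : V = ⋃ i : Fin k, (fun w => v i + w) '' latticeOf B)
    (D₁ D₂ : Set (Fin n → ℝ))
    (hD₁b : Bornology.IsBounded D₁) (hD₁m : MeasurableSet D₁)
    (hD₂b : Bornology.IsBounded D₂) (hD₂m : MeasurableSet D₂)
    (hvol : |B.det| / k < (volume D₁).toReal + (volume D₂).toReal)
    (hfew₁ : ∀ z : Fin n → ℝ, (((fun x => z + x) '' D₁) ∩ V).encard ≤ 1)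
    (hfew₂ : ∀ z : Fin n → ℝ, (((fun x => z + x) '' D₂) ∩ V).encard ≤ 1) :
    (D₁ - D₂) + (V - V) = Set.univ := by
  set b := B.colBasis hB
  set L := (span ℤ (range b)).toAddSubgroup
  have : Countable L := inferInstanceAs (Countable (span ℤ (range b)))
  have hF := ZSpan.isAddFundamentalDomain' b volume
  have hVL : V = ⋃ i, v i +ᵥ (L : Set (Fin n → ℝ)) := by
    rw [hV, latticeOf_eq_span_colBasis B hB]
    rfl
  have hVc : V.Countable := hVL ▸ countable_iUnion fun _ => (to_countable _).image _
  rw [latticeOf_eq_span_colBasis B hB] at hv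
  refine eq_univ_of_forall fun x => ?_
  have h₁ := hF.measure_iUnion_vadd_add_inter v hv hD₁m
    (hVL ▸ zero_vadd (Fin n → ℝ) D₁ ▸ pairwiseDisjoint_vadd_vadd_of_encard_inter_le_one hfew₁ 0)
  have h₂ := hF.measure_iUnion_vadd_add_inter v hv (hD₂m.const_vadd x)
    (hVL ▸ pairwiseDisjoint_vadd_vadd_of_encard_inter_le_one hfew₂ x)
  rw [← hVL, Fintype.card_fin, measure_vadd] at h₂
  rw [← hVL, Fintype.card_fin] at h₁
  have hlt : volume (ZSpan.fundamentalDomain b) < k * volume D₁ + k * volume D₂ := by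
    have hfin : volume D₁ + volume D₂ ≠ ⊤ :=
      ENNReal.add_ne_top.2 ⟨hD₁b.measure_lt_top.ne, hD₂b.measure_lt_top.ne⟩
    rw [B.volume_fundamentalDomain_colBasis hB, ← mul_add, ENNReal.ofReal_lt_iff_lt_toReal
      (abs_nonneg _) (ENNReal.mul_ne_top (ENNReal.natCast_ne_top k) hfin), ENNReal.toReal_mul,
      ENNReal.toReal_add hD₁b.measure_lt_top.ne hD₂b.measure_lt_top.ne,
      ENNReal.toReal_natCast, ← div_lt_iff₀' (by positivity)]
    exact hvol
  obtain ⟨y, hy₁, hy₂⟩ := nonempty_inter_of_measure_lt_add volume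
    ((hVc.measurableSet_add (hD₂m.const_vadd x)).inter (ZSpan.fundamentalDomain_measurableSet b))
    inter_subset_right inter_subset_right (h₁ ▸ h₂ ▸ hlt)
  exact mem_sub_add_sub_of_mem_add_of_mem_add_vadd hy₁.1 hy₂.1
end
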